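/- Let T = T[1..n] be a string over a totally ordered alphabet whose last symbol T[n] occurs only at position n and is strictly smaller than every other symbol of T. Then for every j with 1 ≤ j ≤ n, LA[j] = 1 if and only if the suffix T_j is L-type or j = n. -/

import Mathlib

variable {α : Type*}

/-- A string is primitive if it is not a repetition `S^k` with `k > 1`. -/
def IsPrimitive (T : List α) : Prop :=
  ¬ ∃ (S : List α) (k : ℕ), 1 < k ∧ T = (List.replicate k S).flatten

/-- A string is a Lyndon word if it is primitive and lexicographically strictly
smaller than each of its nontrivial rotations. -/
def IsLyndon [LinearOrder α] (T : List α) : Prop :=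
  IsPrimitive T ∧ ∀ i, 0 < i → i < T.length → T < T.rotate i

/-- `lyndonArray T i` (positions are 1-based) is the length of the longest Lyndon
factor of `T` starting at position `i`. -/
noncomputable def lyndonArray [LinearOrder α] (T : List α) (i : ℕ) : ℕ :=
  sSup {ℓ | ℓ ≤ T.length - (i - 1) ∧ IsLyndon ((T.drop (i - 1)).take ℓ)}

/-- The last symbol of `T` is strictly smaller than the symbol at every other
position (in particular it occurs only at the last position). -/
def Sentinel [LinearOrder α] (T : List α) : Prop :=
  ∀ (i : ℕ) (h : i + 1 < T.length), T[T.length - 1]'(by omega) < T[i]'(by omega)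

/-- The suffix `T_i` (1-based) is L-type if `i < n` and `T_i > T_{i+1}`. -/
def LType [LinearOrder α] (T : List α) (i : ℕ) : Prop :=
  i < T.length ∧ T.drop i < T.drop (i - 1)

/-- The suffix `T_i` (1-based) is S-type if `T_i < T_{i+1}`, or `i = n`. -/
def SType [LinearOrder α] (T : List α) (i : ℕ) : Prop :=
  i = T.length ∨ T.drop (i - 1) < T.drop i

/-- Position `i` (1-based, `2 ≤ i ≤ n`) is LMS-type if `T_i` is S-type and
`T_{i-1}` is L-type. -/
def LMSType [LinearOrder α] (T : List α) (i : ℕ) : Prop :=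
  2 ≤ i ∧ i ≤ T.length ∧ SType T i ∧ LType T (i - 1)

set_option linter.unusedSectionVars false

section Aux

variable [LinearOrder α]

private lemma lex_append_left (p : List α) {x y : List α} (h : x < y) : p ++ x < p ++ y := by
  induction p with
  | nil => exact h
  | cons a p ih => exact List.Lex.cons ih

/-- Structure of a strict lexicographic inequality: either a strict prefix, or a
common prefix followed by a strict mismatch. -/
private lemma lex_cases {x y : List α} (h : List.Lex (· < ·) x y) :
    (∃ z, y = x ++ z ∧ x.length < y.length) ∨
    (∃ p a b s t, a < b ∧ x = p ++ a :: s ∧ y = p ++ b :: t) := by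
  induction h with
  | nil => exact Or.inl ⟨_, rfl, by simp⟩
  | rel hab => exact Or.inr ⟨[], _, _, _, _, hab, rfl, rfl⟩
  | @cons a l₁ l₂ _ ih =>
    rcases ih with ⟨z, hz, hl⟩ | ⟨p, c, d, s, t, hcd, hx, hy⟩
    · exact Or.inl ⟨z, by rw [hz]; rfl, by simpa using hl⟩
    · exact Or.inr ⟨a :: p, c, d, s, t, hcd, by rw [hx]; rfl, by rw [hy]; rfl⟩

/-- If shifting a list by one gives a "match" with itself, the overlap is constant. -/
private lemma all_eq_of_shift {p : List α} : ∀ {h a : α} {s t : List α},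
    p ++ a :: s = h :: (p ++ t) → (∀ x ∈ p, x = h) ∧ a = h := by
  induction p with
  | nil =>
    intro h a s t he
    simp only [List.nil_append] at he
    exact ⟨by simp, (List.cons.inj he).1⟩
  | cons c p ih =>
    intro h a s t he
    rw [List.cons_append] at he
    obtain ⟨hc, he2⟩ := List.cons.inj he
    have he3 : p ++ a :: s = c :: (p ++ t) := by
      rw [he2, List.cons_append]
    obtain ⟨hp, ha⟩ := ih he3
    refine ⟨?_, by rw [ha, hc]⟩
    intro x hx
    rcases List.mem_cons.mp hx with rfl | hx
    · exact hc
    · exact (hp x hx).trans hc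

private lemma length_flatten_replicate (k : ℕ) (S : List α) :
    (List.replicate k S).flatten.length = k * S.length := by
  induction k with
  | zero => simp
  | succ k ih => simp [List.replicate_succ, ih, Nat.succ_mul]; omega

private lemma count_flatten_replicate (k : ℕ) (S : List α) (b : α) :
    (List.replicate k S).flatten.count b = k * S.count b := by
  induction k with
  | zero => simp
  | succ k ih => simp [List.replicate_succ, List.count_append, ih, Nat.succ_mul]; omega

private lemma isLyndon_singleton (a : α) : IsLyndon [a] := by
  constructor
  · rintro ⟨S, k, hk, he⟩
    have hl := congrArg List.length he
    rw [length_flatten_replicate] at hl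
    simp only [List.length_cons, List.length_nil] at hl
    have hdvd : k ∣ 1 := ⟨S.length, by omega⟩
    have := Nat.le_of_dvd one_pos hdvd
    omega
  · intro i hi0 hi1
    simp only [List.length_cons, List.length_nil] at hi1
    omega

/-- `a^m b` with `a < b` is a Lyndon word. -/
private lemma isLyndon_rep (m : ℕ) {a b : α} (hab : a < b) :
    IsLyndon (List.replicate m a ++ [b]) := by
  constructor
  · rintro ⟨S, k, hk, he⟩
    have hc := congrArg (List.count b) he
    have hL : (List.replicate m a ++ [b]).count b = 1 := by
      simp [List.count_append, List.count_replicate, ne_of_lt hab]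
    rw [hL, count_flatten_replicate] at hc
    have hdvd : k ∣ 1 := ⟨S.count b, hc⟩
    have := Nat.le_of_dvd one_pos hdvd
    omega
  · intro i hi0 hilen
    have hlen : (List.replicate m a ++ [b]).length = m + 1 := by simp
    rw [hlen] at hilen
    have him : i ≤ m := by omega
    rw [List.rotate_eq_drop_append_take (by rw [hlen]; omega)]
    rw [List.drop_append_of_le_length (by simpa using him),
        List.take_append_of_le_length (by simpa using him),
        List.drop_replicate, List.take_replicate]
    have hmin : i ⊓ m = i := min_eq_left him
    rw [hmin]
    have hsplit : List.replicate m a = List.replicate (m - i) a ++ List.replicate i a := by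
      rw [← List.replicate_add]
      congr 1
      omega
    rw [hsplit, List.append_assoc, List.append_assoc]
    apply lex_append_left
    rcases Nat.exists_eq_add_of_lt hi0 with ⟨i', rfl⟩
    rw [Nat.zero_add, List.replicate_succ, List.cons_append]
    exact List.Lex.rel hab

/-- If a Lyndon factor of length `≥ 2` starts at the front of `u`, then `u < u.tail`. -/
private lemma lt_tail_of_lyndon {u : List α} {ℓ : ℕ} (h2 : 2 ≤ ℓ) (hl : ℓ ≤ u.length)
    (hW : IsLyndon (u.take ℓ)) : u < u.tail := by
  have hWlen : (u.take ℓ).length = ℓ := by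
    rw [List.length_take]; omega
  obtain ⟨w, W', hWe⟩ : ∃ w W', u.take ℓ = w :: W' := by
    cases hWc : u.take ℓ with
    | nil => rw [hWc] at hWlen; simp at hWlen; omega
    | cons w W' => exact ⟨w, W', rfl⟩
  have hW'len : W'.length = ℓ - 1 := by
    rw [hWe] at hWlen; simp at hWlen; omega
  have hrot : u.take ℓ < (u.take ℓ).rotate 1 := hW.2 1 one_pos (by omega)
  rw [hWe] at hrot
  rw [show (1 : ℕ) = 0 + 1 from rfl, List.rotate_cons_succ, List.rotate_zero] at hrot
  -- hrot : w :: W' < W' ++ [w]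
  rcases lex_cases hrot with ⟨z, hz, hlz⟩ | ⟨p, c, d, s, t, hcd, hx, hy⟩
  · simp at hlz
  · -- hx : w :: W' = p ++ c :: s,  hy : W' ++ [w] = p ++ d :: t
    have hxlen := congrArg List.length hx
    have hylen := congrArg List.length hy
    simp at hxlen hylen
    cases ht : t with
    | nil =>
      exfalso
      subst ht
      have hplen : W'.length = p.length := by simp at hylen; omega
      obtain ⟨hW'p, hwd⟩ := List.append_inj hy hplen
      have hwd' : w = d := by simpa using hwd
      subst hW'p
      have hslen : s = [] := by
        have : s.length = 0 := by omega
        exact List.eq_nil_of_length_eq_zero this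
      subst hslen
      -- hx : w :: W' = W' ++ [c]
      have heq : W' ++ c :: ([] : List α) = w :: (W' ++ ([] : List α)) := by
        simpa using hx.symm
      obtain ⟨hall, hcw⟩ := all_eq_of_shift heq
      subst hwd'
      rw [hcw] at hcd
      exact lt_irrefl _ hcd
    | cons t0 t1 =>
      subst ht
      -- mismatch is strictly inside W'
      have hplt : p.length + 1 ≤ W'.length := by simp at hylen; omega
      have hW'eq : W' = p ++ d :: List.take (W'.length - p.length - 1) (t0 :: t1) := by
        have h1 : W' = List.take W'.length (W' ++ [w]) := by
          rw [List.take_left]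
        rw [hy] at h1
        rw [List.take_append] at h1
        rw [List.take_of_length_le (by omega)] at h1
        have h2 : List.take (W'.length - p.length) (d :: t0 :: t1)
            = d :: List.take (W'.length - p.length - 1) (t0 :: t1) := by
          rcases Nat.exists_eq_add_of_le hplt with ⟨q, hq⟩
          have hq' : W'.length - p.length = q + 1 := by omega
          rw [hq', List.take_succ_cons]
          simp
        rw [h2] at h1
        exact h1
      -- Now conclude
      have hu2 : u = w :: (W' ++ u.drop ℓ) := by
        conv_lhs => rw [← List.take_append_drop ℓ u, hWe]
        rw [List.cons_append]
      have hutail : u.tail = W' ++ u.drop ℓ := by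
        conv_lhs => rw [hu2, List.tail_cons]
      rw [hutail]
      conv_lhs => rw [hu2]
      have e1 : w :: (W' ++ u.drop ℓ) = p ++ c :: (s ++ u.drop ℓ) := by
        rw [← List.cons_append, hx, List.append_assoc, List.cons_append]
      have e2 : W' ++ u.drop ℓ
          = p ++ d :: (List.take (W'.length - p.length - 1) (t0 :: t1) ++ u.drop ℓ) := by
        conv_lhs => rw [hW'eq]
        rw [List.append_assoc, List.cons_append]
      rw [e1, e2]
      exact lex_append_left p (List.Lex.rel hcd)

end Aux

/-- For `1 ≤ j ≤ n`, `LA[j] = 1` iff `T_j` is an L-type suffix or `j = n`. -/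
theorem stmt4 [LinearOrder α] (T : List α) (n : ℕ) (hn : T.length = n)
    (hsent : Sentinel T) (j : ℕ) (hj1 : 1 ≤ j) (hjn : j ≤ n) :
    lyndonArray T j = 1 ↔ (LType T j ∨ j = n) := by
  subst hn
  set u : List α := T.drop (j - 1) with hu
  set S : Set ℕ := {ℓ | ℓ ≤ T.length - (j - 1) ∧ IsLyndon (u.take ℓ)} with hS
  have hulen : u.length = T.length - (j - 1) := by rw [hu, List.length_drop]
  have hule : 1 ≤ T.length - (j - 1) := by omega
  have hbdd : BddAbove S := ⟨T.length - (j - 1), fun ℓ hℓ => hℓ.1⟩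
  have hutail : u.tail = T.drop j := by
    rw [hu, List.tail_drop]
    congr 1
    omega
  have h1mem : 1 ∈ S := by
    refine ⟨hule, ?_⟩
    cases hu' : u with
    | nil => rw [hu'] at hulen; simp at hulen; omega
    | cons a u' =>
      have h1 : List.take 1 (a :: u') = [a] := rfl
      rw [h1]
      exact isLyndon_singleton a
  have hLA : lyndonArray T j = sSup S := rfl
  rw [hLA]
  constructor
  · -- LA = 1 → L-type or j = n
    intro hsup
    by_contra hcon
    push_neg at hcon
    obtain ⟨hnotL, hjne⟩ := hcon
    have hjlt : j < T.length := lt_of_le_of_ne hjn hjne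
    have hnlt : ¬ (T.drop j < T.drop (j - 1)) := fun h => hnotL ⟨hjlt, h⟩
    rw [← hutail, ← hu] at hnlt
    have hulen2 : 2 ≤ u.length := by omega
    have hlt : u < u.tail := by
      rcases lt_trichotomy u u.tail with h | h | h
      · exact h
      · exfalso
        have := congrArg List.length h
        rw [List.length_tail] at this
        omega
      · exact absurd h hnlt
    rcases lex_cases hlt with ⟨z, hz, hlz⟩ | ⟨p, a, b, s, t, hab, hx, hy⟩
    · rw [List.length_tail] at hlz
      omega
    · -- hx : u = p ++ a :: s, hy : u.tail = p ++ b :: t, a < b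
      obtain ⟨h0, v, huv⟩ : ∃ h0 v, u = h0 :: v := by
        cases hu' : u with
        | nil => rw [hu'] at hulen; simp at hulen; omega
        | cons h0 v => exact ⟨h0, v, rfl⟩
      have hvt : u.tail = v := by rw [huv]; rfl
      have hv2 : v = p ++ b :: t := hvt.symm.trans hy
      have heq : p ++ a :: s = h0 :: (p ++ b :: t) := by
        rw [← hx, huv, hv2]
      obtain ⟨hall, hah⟩ := all_eq_of_shift heq
      -- s = b :: t
      have hs : s = b :: t := by
        have h1 : u = (h0 :: p) ++ b :: t := by
          rw [huv, hv2, List.cons_append]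
        have h2 := congrArg (List.drop (p.length + 1)) (hx.symm.trans h1)
        have e1 : List.drop (p.length + 1) (p ++ a :: s) = s := by
          rw [show p ++ a :: s = (p ++ [a]) ++ s by simp,
              show p.length + 1 = (p ++ [a]).length by simp]
          exact List.drop_left
        have e2 : List.drop (p.length + 1) ((h0 :: p) ++ b :: t) = b :: t := by
          rw [show p.length + 1 = (h0 :: p).length by simp]
          exact List.drop_left
        rw [e1, e2] at h2
        exact h2
      have hpa : p ++ [a] = List.replicate (p.length + 1) h0 := by
        rw [List.eq_replicate_iff]
        constructor
        · simp
        · intro x hx'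
          rcases List.mem_append.mp hx' with h | h
          · exact hall x h
          · rw [List.mem_singleton.mp h]; exact hah
      have hWly : IsLyndon (u.take (p.length + 2)) := by
        have htake : u.take (p.length + 2) = List.replicate (p.length + 1) h0 ++ [b] := by
          rw [hx, hs]
          rw [List.take_append]
          rw [List.take_of_length_le (by omega)]
          have h3 : p.length + 2 - p.length = 2 := by omega
          rw [h3]
          rw [show List.take 2 (a :: b :: t) = [a, b] from rfl]
          rw [← hpa]
          simp
        rw [htake]
        apply isLyndon_rep
        rw [← hah]
        exact hab
      have hmem2 : p.length + 2 ∈ S := by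
        refine ⟨?_, hWly⟩
        have h4 := congrArg List.length hx
        rw [hs] at h4
        simp at h4
        omega
      have h5 := le_csSup hbdd hmem2
      rw [hsup] at h5
      omega
  · -- L-type or j = n → LA = 1
    intro h
    apply le_antisymm
    · apply csSup_le ⟨1, h1mem⟩
      intro ℓ hℓ
      by_contra hc
      push_neg at hc
      have h2 : 2 ≤ ℓ := hc
      obtain ⟨hℓle, hℓly⟩ := hℓ
      exfalso
      rcases h with hL | rfl
      · have hlt : u < u.tail := lt_tail_of_lyndon h2 (by omega) hℓly
        rw [hutail] at hlt
        have hL2 : List.drop j T < u := hL.2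
        exact absurd hL2 (asymm hlt)
      · omega
    · exact le_csSup hbdd h1mem
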